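/- The time-dependent variational inequality for the perpetual American put has at most one time-decreasing solution: if V₁, V₂ : (0,∞) × (0,∞) → ℝ both have partial derivatives ∂_t Vᵢ, ∂_S Vᵢ, ∂²_{SS} Vᵢ, are positive, nonincreasing in t, satisfy min{(−LVᵢ)(S,t), Vᵢ(S,t) − max(E−S,0)} = 0 for all S > 0 and t > 0, and satisfy Vᵢ(S,t) → E as S → 0⁺ and Vᵢ(S,t) → 0 as S → +∞ for every fixed t > 0 (i = 1,2), then V₁ = V₂ on (0,∞) × (0,∞). -/

import Mathlib

/-- The parabolic Black–Scholes operator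
`(−LV)(S,t) = −∂_t V − (σ²/2)·S²·∂²_{SS}V − (r−q)·S·∂_S V + r·V`,
expressed via explicitly given partial derivative functions. -/
noncomputable def negLp (r q σ : ℝ) (V Vt VS VSS : ℝ → ℝ → ℝ) (S t : ℝ) : ℝ :=
  -Vt S t - (σ ^ 2 / 2) * S ^ 2 * VSS S t - (r - q) * S * VS S t + r * V S t

/-!
Suppose `V₁ > V₂` somewhere, say with gap `m` at time `t₀`. At a positive maximum in `S` of
`V₁ - V₂`, `V₁` lies strictly above the obstacle `max (E - S) 0 ≤ V₂`, so `-LV₁ = 0` there while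
`-LV₂ ≥ 0`; with `∂_S (V₁ - V₂) = 0` and `∂²_SS (V₁ - V₂) ≤ 0` this gives
`∂_t (V₁ - V₂) ≥ r (V₁ - V₂)`. By continuous induction in `t` the maximal gap therefore stays above
`m + r m (t - t₀) / 2`. But `V₁` is nonincreasing in `t` and `V₂ ≥ 0`, and the boundary behaviour
of `V₁ (·, t₀)` confines every gap `≥ m` to a fixed compact interval of `S`, on which `V₁ (·, t₀)`
is bounded: a contradiction. By symmetry `V₁ = V₂`.
-/

open Filter Set Topology

theorem forall_ge_of_real_induction {P : ℝ → Prop} {a : ℝ} (ha : P a)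
    (hright : ∀ s, a ≤ s → P s → ∀ᶠ τ in 𝓝[>] s, P τ)
    (hleft : ∀ s, a < s → (∀ τ ∈ Ico a s, P τ) → P s) : ∀ t, a ≤ t → P t := by
  by_contra! ⟨t, hat, ht⟩
  set N := {τ | a ≤ τ ∧ ¬ P τ}
  have hNne : N.Nonempty := ⟨t, hat, ht⟩
  have hNbdd : BddBelow N := ⟨a, fun τ hτ => hτ.1⟩
  have has : a ≤ sInf N := le_csInf hNne fun τ hτ => hτ.1
  have hbelow : ∀ τ ∈ Ico a (sInf N), P τ := fun τ hτ =>
    by_contra fun hP => (csInf_le hNbdd ⟨hτ.1, hP⟩).not_gt hτ.2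
  have hs : P (sInf N) := has.eq_or_lt.elim (fun h => h ▸ ha) fun h => hleft _ h hbelow
  obtain ⟨b, hsb, hb⟩ := mem_nhdsGT_iff_exists_Ioo_subset.1 (hright _ has hs)
  refine (mem_Ioi.1 hsb).not_ge (le_csInf hNne fun τ hτ => ?_)
  by_contra! hτb
  rcases (csInf_le hNbdd hτ).eq_or_lt with h | h
  · exact hτ.2 (h ▸ hs)
  · exact hτ.2 (hb ⟨h, hτb⟩)

theorem HasDerivAt.eventually_nhdsGT_pos {f : ℝ → ℝ} {f' x : ℝ} (hf : HasDerivAt f f' x)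
    (hx : 0 ≤ f x) (hf' : 0 < f') : ∀ᶠ y in 𝓝[>] x, 0 < f y := by
  have hslope := (hasDerivAt_iff_tendsto_slope.1 hf).mono_left (nhdsGT_le_nhdsNE x)
  filter_upwards [hslope.eventually (eventually_gt_nhds hf'), self_mem_nhdsWithin]
    with y hy hxy
  rw [slope_def_field, div_pos_iff_of_pos_right (sub_pos.2 hxy)] at hy
  linarith

theorem IsLocalMax.hasDerivAt_deriv_nonpos {f f' : ℝ → ℝ} {f'' c : ℝ}
    (hf : ∀ᶠ x in 𝓝 c, HasDerivAt f (f' x) x) (hf' : HasDerivAt f' f'' c)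
    (hmax : IsLocalMax f c) : f'' ≤ 0 := by
  by_contra! hpos
  have hd : deriv f =ᶠ[𝓝 c] f' := hf.mono fun x hx => hx.deriv
  have hmin : IsLocalMin f c := by
    refine isLocalMin_of_deriv_deriv_pos ?_ ?_ hf.self_of_nhds.continuousAt
    · rwa [hd.deriv_eq, hf'.deriv]
    · rw [hd.eq_of_nhds]; exact hmax.hasDerivAt_eq_zero hf.self_of_nhds
  have hconst : f =ᶠ[𝓝 c] fun _ => f c := by
    filter_upwards [hmin, hmax] with x h₁ h₂ using le_antisymm h₂ h₁
  have hzero : f' =ᶠ[𝓝 c] fun _ => 0 := hd.symm.trans (hconst.deriv.trans (by simp))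
  exact hpos.ne' ((hf'.congr_of_eventuallyEq hzero.symm).unique (hasDerivAt_const c 0))

theorem IsCompact.exists_isMaxOn_of_superlevel_subset {X Y : Type*} [TopologicalSpace X]
    [TopologicalSpace Y] [LinearOrder Y] [ClosedIciTopology Y] {f : X → Y} {K U : Set X}
    (hK : IsCompact K) (hf : ContinuousOn f K) {x₀ : X} (hx₀ : x₀ ∈ K)
    (hsub : ∀ x ∈ U, f x₀ ≤ f x → x ∈ K) : ∃ c ∈ K, f x₀ ≤ f c ∧ IsMaxOn f U c := by
  obtain ⟨c, hcK, hc⟩ := hK.exists_isMaxOn ⟨x₀, hx₀⟩ hf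
  refine ⟨c, hcK, hc hx₀, fun x hx => show f x ≤ f c from ?_⟩
  by_contra! hlt
  exact (hc (hsub x hx ((hc hx₀).trans hlt.le))).not_gt hlt

theorem exists_le_sub_of_forall_Ico {X : Type*} [TopologicalSpace X] [FirstCountableTopology X]
    {K : Set X} (hK : IsCompact K) {u v : X → ℝ → ℝ} {φ : ℝ → ℝ} {a s : ℝ} (has : a < s)
    (hφ : ContinuousAt φ s) (hu : ∀ x ∈ K, AntitoneOn (u x) (Icc a s))
    (hv : ∀ x ∈ K, AntitoneOn (v x) (Icc a s)) (hus : ∀ x ∈ K, ContinuousAt (u x) s)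
    (huK : ∀ t ∈ Ico a s, ContinuousOn (fun x => u x t) K)
    (hvK : ContinuousOn (fun x => v x s) K)
    (h : ∀ τ ∈ Ico a s, ∃ x ∈ K, φ τ ≤ u x τ - v x τ) : ∃ x ∈ K, φ s ≤ u x s - v x s := by
  obtain ⟨τ, -, hτ, hτs⟩ := exists_seq_strictMono_tendsto' has
  choose x hxK hx using fun n => h (τ n) (Ioo_subset_Ico_self (hτ n))
  obtain ⟨y, hyK, ψ, hψ, hxy⟩ := hK.tendsto_subseq hxK
  have hτψ : Tendsto (τ ∘ ψ) atTop (𝓝 s) := hτs.comp hψ.tendsto_atTop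
  have hxyK : Tendsto (x ∘ ψ) atTop (𝓝[K] y) :=
    tendsto_nhdsWithin_iff.2 ⟨hxy, Eventually.of_forall fun n => hxK (ψ n)⟩
  -- monotonicity in time stands in for the missing joint continuity of `u` and `v`
  have hfrozen : ∀ t ∈ Ico a s, φ s ≤ u y t - v y s := by
    intro t ht
    refine le_of_tendsto_of_tendsto (hφ.tendsto.comp hτψ)
      (((huK t ht y hyK).tendsto.comp hxyK).sub ((hvK y hyK).tendsto.comp hxyK)) ?_
    filter_upwards [hτψ.eventually (eventually_ge_nhds ht.2)] with n (hn : t ≤ τ (ψ n))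
    have hτn := hτ (ψ n)
    have hu' := hu _ (hxK (ψ n)) ⟨ht.1, ht.2.le⟩ ⟨ht.1.trans hn, hτn.2.le⟩ hn
    have hv' := hv _ (hxK (ψ n)) ⟨hτn.1.le, hτn.2.le⟩ ⟨has.le, le_rfl⟩ hτn.2.le
    show φ (τ (ψ n)) ≤ u (x (ψ n)) t - v (x (ψ n)) s
    linarith [hx (ψ n)]
  have hus' := (hus y hyK).mono_left (nhdsWithin_le_nhds (s := Iio s))
  refine ⟨y, hyK, ge_of_tendsto (hus'.sub_const _) ?_⟩
  filter_upwards [Ioo_mem_nhdsLT has] with t ht using hfrozen t (Ioo_subset_Ico_self ht)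

theorem antitoneOn_Ioi_of_hasDerivAt_nonpos {f f' : ℝ → ℝ} {a : ℝ}
    (hf : ∀ x, a < x → HasDerivAt f (f' x) x) (hf' : ∀ x, a < x → f' x ≤ 0) :
    AntitoneOn f (Ioi a) :=
  antitoneOn_of_hasDerivWithinAt_nonpos (convex_Ioi a)
    (fun x hx => (hf x hx).continuousAt.continuousWithinAt)
    (by simpa using fun x hx => (hf x hx).hasDerivWithinAt) (by simpa using hf')

theorem exists_Icc_superlevel_sub_payoff_subset {f : ℝ → ℝ} {E m : ℝ}
    (hf0 : Tendsto f (𝓝[>] 0) (𝓝 E)) (hftop : Tendsto f atTop (𝓝 0)) (hm : 0 < m) :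
    ∃ A B, 0 < A ∧ ∀ S, 0 < S → m ≤ f S - max (E - S) 0 → S ∈ Icc A B := by
  have hgap0 : Tendsto (fun S => f S - (E - S)) (𝓝[>] 0) (𝓝 0) := by
    simpa using hf0.sub ((tendsto_const_nhds (x := E)).sub
      (tendsto_id.mono_left (nhdsWithin_le_nhds (s := Ioi (0 : ℝ)))))
  obtain ⟨A, hA, hAsub⟩ :=
    mem_nhdsGT_iff_exists_Ioo_subset.1 (hgap0.eventually (eventually_lt_nhds hm))
  obtain ⟨B, hB⟩ := (hftop.eventually (eventually_lt_nhds hm)).exists_forall_of_atTop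
  refine ⟨A, B, hA, fun S hS hgap => ⟨?_, ?_⟩⟩
  · by_contra! hSA
    linarith [show f S - (E - S) < m from hAsub ⟨hS, hSA⟩, le_max_left (E - S) 0]
  · by_contra! hBS
    linarith [hB S hBS.le, le_max_right (E - S) 0]

def HasPartialDerivs (V Vt VS VSS : ℝ → ℝ → ℝ) : Prop :=
  ∀ S t : ℝ, 0 < S → 0 < t →
    HasDerivAt (fun τ => V S τ) (Vt S t) t ∧
    HasDerivAt (fun s => V s t) (VS S t) S ∧
    HasDerivAt (fun s => VS s t) (VSS S t) S

def SolvesPutVI (r q σ E : ℝ) (V Vt VS VSS : ℝ → ℝ → ℝ) : Prop :=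
  ∀ S t : ℝ, 0 < S → 0 < t → min (negLp r q σ V Vt VS VSS S t) (V S t - max (E - S) 0) = 0

section

variable {r q σ E : ℝ} {V Vt VS VSS : ℝ → ℝ → ℝ} {S t : ℝ}

theorem HasPartialDerivs.antitoneOn (hd : HasPartialDerivs V Vt VS VSS)
    (hdec : ∀ S t, 0 < S → 0 < t → Vt S t ≤ 0) (hS : 0 < S) : AntitoneOn (V S) (Ioi 0) :=
  antitoneOn_Ioi_of_hasDerivAt_nonpos (fun t ht => (hd S t hS ht).1) (hdec S · hS)

theorem SolvesPutVI.payoff_le (h : SolvesPutVI r q σ E V Vt VS VSS) (hS : 0 < S) (ht : 0 < t) :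
    max (E - S) 0 ≤ V S t :=
  sub_nonneg.1 ((h S t hS ht).symm.trans_le (min_le_right _ _))

theorem SolvesPutVI.negLp_nonneg (h : SolvesPutVI r q σ E V Vt VS VSS) (hS : 0 < S)
    (ht : 0 < t) : 0 ≤ negLp r q σ V Vt VS VSS S t :=
  (h S t hS ht).symm.trans_le (min_le_left _ _)

theorem SolvesPutVI.negLp_eq_zero (h : SolvesPutVI r q σ E V Vt VS VSS) (hS : 0 < S)
    (ht : 0 < t) (hV : max (E - S) 0 < V S t) : negLp r q σ V Vt VS VSS S t = 0 := by
  rcases min_eq_iff.1 (h S t hS ht) with ⟨h, -⟩ | ⟨h, -⟩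
  · exact h
  · linarith

end

section

variable {r q σ E : ℝ} {V₁ Vt₁ VS₁ VSS₁ V₂ Vt₂ VS₂ VSS₂ : ℝ → ℝ → ℝ}

theorem mul_sub_le_sub_of_isMaxOn (hd₁ : HasPartialDerivs V₁ Vt₁ VS₁ VSS₁)
    (hd₂ : HasPartialDerivs V₂ Vt₂ VS₂ VSS₂) (hVI₁ : SolvesPutVI r q σ E V₁ Vt₁ VS₁ VSS₁)
    (hVI₂ : SolvesPutVI r q σ E V₂ Vt₂ VS₂ VSS₂) {S t : ℝ} (hS : 0 < S) (ht : 0 < t)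
    (hmax : IsMaxOn (fun x => V₁ x t - V₂ x t) (Ioi 0) S) (hgap : V₂ S t < V₁ S t) :
    r * (V₁ S t - V₂ S t) ≤ Vt₁ S t - Vt₂ S t := by
  have hloc : IsLocalMax (fun x => V₁ x t - V₂ x t) S := hmax.isLocalMax (Ioi_mem_nhds hS)
  have hderiv : ∀ᶠ x in 𝓝 S, HasDerivAt (fun x => V₁ x t - V₂ x t) (VS₁ x t - VS₂ x t) x :=
    eventually_of_mem (Ioi_mem_nhds hS) fun x hx => (hd₁ x t hx ht).2.1.sub (hd₂ x t hx ht).2.1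
  have hVS : VS₁ S t = VS₂ S t := sub_eq_zero.1 (hloc.hasDerivAt_eq_zero hderiv.self_of_nhds)
  have hVSS : VSS₁ S t - VSS₂ S t ≤ 0 :=
    hloc.hasDerivAt_deriv_nonpos hderiv ((hd₁ S t hS ht).2.2.sub (hd₂ S t hS ht).2.2)
  have hL₁ := hVI₁.negLp_eq_zero hS ht ((hVI₂.payoff_le hS ht).trans_lt hgap)
  have hL₂ := hVI₂.negLp_nonneg hS ht
  unfold negLp at hL₁ hL₂
  have hdiffusion : 0 ≤ σ ^ 2 / 2 * S ^ 2 * (VSS₂ S t - VSS₁ S t) :=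
    mul_nonneg (by positivity) (by linarith)
  rw [hVS] at hL₁
  linarith

theorem eventually_exists_le_sub (hr : 0 ≤ r) (hd₁ : HasPartialDerivs V₁ Vt₁ VS₁ VSS₁)
    (hd₂ : HasPartialDerivs V₂ Vt₂ VS₂ VSS₂) (hVI₁ : SolvesPutVI r q σ E V₁ Vt₁ VS₁ VSS₁)
    (hVI₂ : SolvesPutVI r q σ E V₂ Vt₂ VS₂ VSS₂) {K : Set ℝ} (hK : IsCompact K)
    (hK0 : K ⊆ Ioi 0) {φ : ℝ → ℝ} {φ' s : ℝ} (hs : 0 < s) (hφ : HasDerivAt φ φ' s)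
    (hφpos : 0 < φ s) (hφ' : φ' < r * φ s)
    (hsub : ∀ S, 0 < S → φ s ≤ V₁ S s - V₂ S s → S ∈ K)
    (hP : ∃ S ∈ K, φ s ≤ V₁ S s - V₂ S s) :
    ∀ᶠ τ in 𝓝[>] s, ∃ S ∈ K, φ τ ≤ V₁ S τ - V₂ S τ := by
  obtain ⟨S, hSK, hS⟩ := hP
  have hcont : ContinuousOn (fun x => V₁ x s - V₂ x s) K := fun x hx =>
    ((hd₁ x s (hK0 hx) hs).2.1.sub (hd₂ x s (hK0 hx) hs).2.1).continuousAt.continuousWithinAt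
  obtain ⟨Sm, hSmK, hSSm, hmax⟩ := hK.exists_isMaxOn_of_superlevel_subset hcont hSK
    (U := Ioi 0) fun x hx hle => hsub x hx (hS.trans hle)
  have hSm : 0 < Sm := hK0 hSmK
  have hrate := mul_sub_le_sub_of_isMaxOn hd₁ hd₂ hVI₁ hVI₂ hSm hs hmax (by linarith)
  have hq : HasDerivAt (fun τ => V₁ Sm τ - V₂ Sm τ - φ τ) (Vt₁ Sm s - Vt₂ Sm s - φ') s :=
    ((hd₁ Sm s hSm hs).1.sub (hd₂ Sm s hSm hs).1).sub hφ
  filter_upwards [hq.eventually_nhdsGT_pos (by linarith) (by nlinarith)] with τ hτ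
  exact ⟨Sm, hSmK, by linarith⟩

theorem forall_ge_exists_le_sub (hr : 0 < r) (hd₁ : HasPartialDerivs V₁ Vt₁ VS₁ VSS₁)
    (hd₂ : HasPartialDerivs V₂ Vt₂ VS₂ VSS₂) (hdec₁ : ∀ S t : ℝ, 0 < S → 0 < t → Vt₁ S t ≤ 0)
    (hdec₂ : ∀ S t : ℝ, 0 < S → 0 < t → Vt₂ S t ≤ 0)
    (hVI₁ : SolvesPutVI r q σ E V₁ Vt₁ VS₁ VSS₁) (hVI₂ : SolvesPutVI r q σ E V₂ Vt₂ VS₂ VSS₂)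
    {K : Set ℝ} (hK : IsCompact K) (hK0 : K ⊆ Ioi 0) {t₀ m : ℝ} (ht₀ : 0 < t₀) (hm : 0 < m)
    (hsub : ∀ S t, 0 < S → t₀ ≤ t → m ≤ V₁ S t - V₂ S t → S ∈ K)
    (h₀ : ∃ S ∈ K, m ≤ V₁ S t₀ - V₂ S t₀) :
    ∀ t, t₀ ≤ t → ∃ S ∈ K, m + r * m / 2 * (t - t₀) ≤ V₁ S t - V₂ S t := by
  have hφd : ∀ t, HasDerivAt (fun t => m + r * m / 2 * (t - t₀)) (r * m / 2) t := fun t => by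
    simpa using (((hasDerivAt_id' t).sub_const t₀).const_mul (r * m / 2)).const_add m
  have hφm : ∀ t, t₀ ≤ t → m ≤ m + r * m / 2 * (t - t₀) := fun t ht => by
    have := sub_nonneg.2 ht
    have : 0 ≤ r * m / 2 * (t - t₀) := by positivity
    linarith
  -- any slope below `r * m` would do; the margin must be strict for `eventually_exists_le_sub`
  refine forall_ge_of_real_induction (by simpa using h₀) ?_ ?_
  · intro s hs hPs
    have hφs := hφm s hs
    exact eventually_exists_le_sub hr.le hd₁ hd₂ hVI₁ hVI₂ hK hK0 (ht₀.trans_le hs) (hφd s)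
      (hm.trans_le hφs) (by nlinarith) (fun S hS h => hsub S s hS hs (hφs.trans h)) hPs
  · intro s hs hPs
    have hIcc : Icc t₀ s ⊆ Ioi 0 := fun t ht => ht₀.trans_le ht.1
    exact exists_le_sub_of_forall_Ico hK hs (hφd s).continuousAt
      (fun x hx => (hd₁.antitoneOn hdec₁ (hK0 hx)).mono hIcc)
      (fun x hx => (hd₂.antitoneOn hdec₂ (hK0 hx)).mono hIcc)
      (fun x hx => (hd₁ x s (hK0 hx) (ht₀.trans hs)).1.continuousAt)
      (fun t ht x hx =>
        (hd₁ x t (hK0 hx) (hIcc (Ico_subset_Icc_self ht))).2.1.continuousAt.continuousWithinAt)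
      (fun x hx => (hd₂ x s (hK0 hx) (ht₀.trans hs)).2.1.continuousAt.continuousWithinAt) hPs

theorem le_of_solvesPutVI (hr : 0 < r)
    (hd₁ : HasPartialDerivs V₁ Vt₁ VS₁ VSS₁) (hd₂ : HasPartialDerivs V₂ Vt₂ VS₂ VSS₂)
    (hdec₁ : ∀ S t : ℝ, 0 < S → 0 < t → Vt₁ S t ≤ 0)
    (hdec₂ : ∀ S t : ℝ, 0 < S → 0 < t → Vt₂ S t ≤ 0)
    (hVI₁ : SolvesPutVI r q σ E V₁ Vt₁ VS₁ VSS₁) (hVI₂ : SolvesPutVI r q σ E V₂ Vt₂ VS₂ VSS₂)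
    (hlim0₁ : ∀ t : ℝ, 0 < t → Tendsto (fun S => V₁ S t) (𝓝[>] 0) (𝓝 E))
    (hlimtop₁ : ∀ t : ℝ, 0 < t → Tendsto (fun S => V₁ S t) atTop (𝓝 0)) :
    ∀ S t : ℝ, 0 < S → 0 < t → V₁ S t ≤ V₂ S t := by
  intro S₀ t₀ hS₀ ht₀
  by_contra! hlt
  set m := V₁ S₀ t₀ - V₂ S₀ t₀
  have hm : 0 < m := sub_pos.2 hlt
  have hV₁ : ∀ S t, 0 < S → t₀ ≤ t → V₁ S t ≤ V₁ S t₀ := fun S t hS ht =>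
    hd₁.antitoneOn hdec₁ hS ht₀ (ht₀.trans_le ht) ht
  obtain ⟨A, B, hA, hAB⟩ := exists_Icc_superlevel_sub_payoff_subset (hlim0₁ t₀ ht₀)
    (hlimtop₁ t₀ ht₀) hm
  have hK0 : Icc A B ⊆ Ioi 0 := fun x hx => hA.trans_le hx.1
  have hsub : ∀ S t, 0 < S → t₀ ≤ t → m ≤ V₁ S t - V₂ S t → S ∈ Icc A B := by
    intro S t hS ht hgap
    refine hAB S hS (hgap.trans ?_)
    linarith [hV₁ S t hS ht, hVI₂.payoff_le hS (ht₀.trans_le ht)]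
  have hgrowth := forall_ge_exists_le_sub hr hd₁ hd₂ hdec₁ hdec₂ hVI₁ hVI₂ isCompact_Icc hK0 ht₀
    hm hsub ⟨S₀, hsub S₀ t₀ hS₀ le_rfl le_rfl, le_rfl⟩
  obtain ⟨M, hM⟩ := (isCompact_Icc (a := A) (b := B)).bddAbove_image
    (f := fun S => V₁ S t₀) fun x hx => (hd₁ x t₀ (hK0 hx) ht₀).2.1.continuousAt.continuousWithinAt
  have hlinear : Tendsto (fun t => m + r * m / 2 * (t - t₀)) atTop atTop :=
    tendsto_atTop_add_const_left _ m <|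
      (tendsto_atTop_add_const_right _ (-t₀) tendsto_id).const_mul_atTop (by positivity)
  obtain ⟨T, hTM, hT⟩ := ((hlinear.eventually_gt_atTop M).and (eventually_ge_atTop t₀)).exists
  obtain ⟨S, hSK, hS⟩ := hgrowth T hT
  have hS0 : 0 < S := hK0 hSK
  linarith [hM ⟨S, hSK, rfl⟩, hV₁ S T hS0 hT, le_max_right (E - S) 0,
    hVI₂.payoff_le hS0 (ht₀.trans_le hT)]

end

theorem uniqueness_time_dependent_perpetual_put_VI_general
    (r q σ E : ℝ) (hr : 0 < r)
    (V₁ Vt₁ VS₁ VSS₁ V₂ Vt₂ VS₂ VSS₂ : ℝ → ℝ → ℝ)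
    (hd₁ : ∀ S t : ℝ, 0 < S → 0 < t →
      HasDerivAt (fun τ => V₁ S τ) (Vt₁ S t) t ∧
      HasDerivAt (fun s => V₁ s t) (VS₁ S t) S ∧
      HasDerivAt (fun s => VS₁ s t) (VSS₁ S t) S)
    (hd₂ : ∀ S t : ℝ, 0 < S → 0 < t →
      HasDerivAt (fun τ => V₂ S τ) (Vt₂ S t) t ∧
      HasDerivAt (fun s => V₂ s t) (VS₂ S t) S ∧
      HasDerivAt (fun s => VS₂ s t) (VSS₂ S t) S)
    (hdec₁ : ∀ S t : ℝ, 0 < S → 0 < t → Vt₁ S t ≤ 0)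
    (hdec₂ : ∀ S t : ℝ, 0 < S → 0 < t → Vt₂ S t ≤ 0)
    (hVI₁ : ∀ S t : ℝ, 0 < S → 0 < t →
      min (negLp r q σ V₁ Vt₁ VS₁ VSS₁ S t) (V₁ S t - max (E - S) 0) = 0)
    (hVI₂ : ∀ S t : ℝ, 0 < S → 0 < t →
      min (negLp r q σ V₂ Vt₂ VS₂ VSS₂ S t) (V₂ S t - max (E - S) 0) = 0)
    (hlim0₁ : ∀ t : ℝ, 0 < t →
      Filter.Tendsto (fun S => V₁ S t) (nhdsWithin 0 (Set.Ioi 0)) (nhds E))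
    (hlim0₂ : ∀ t : ℝ, 0 < t →
      Filter.Tendsto (fun S => V₂ S t) (nhdsWithin 0 (Set.Ioi 0)) (nhds E))
    (hlimtop₁ : ∀ t : ℝ, 0 < t →
      Filter.Tendsto (fun S => V₁ S t) Filter.atTop (nhds 0))
    (hlimtop₂ : ∀ t : ℝ, 0 < t →
      Filter.Tendsto (fun S => V₂ S t) Filter.atTop (nhds 0)) :
    ∀ S t : ℝ, 0 < S → 0 < t → V₁ S t = V₂ S t := fun S t hS ht =>
  le_antisymm
    (le_of_solvesPutVI hr hd₁ hd₂ hdec₁ hdec₂ hVI₁ hVI₂ hlim0₁ hlimtop₁ S t hS ht)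
    (le_of_solvesPutVI hr hd₂ hd₁ hdec₂ hdec₁ hVI₂ hVI₁ hlim0₂ hlimtop₂ S t hS ht)

/-- Uniqueness of the time-decreasing solution of the time-dependent variational
inequality for the perpetual American put: two positive, time-nonincreasing solutions
with boundary behaviour `V(S,t) → E` as `S → 0⁺` and `V(S,t) → 0` as `S → +∞` for every
fixed `t > 0` coincide on `(0,∞) × (0,∞)`. -/
theorem uniqueness_time_dependent_perpetual_put_VI
    (r q σ E : ℝ) (hr : 0 < r) (hq : 0 ≤ q) (hσ : 0 < σ) (hE : 0 < E)
    (V₁ Vt₁ VS₁ VSS₁ V₂ Vt₂ VS₂ VSS₂ : ℝ → ℝ → ℝ)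
    (hd₁ : ∀ S t : ℝ, 0 < S → 0 < t →
      HasDerivAt (fun τ => V₁ S τ) (Vt₁ S t) t ∧
      HasDerivAt (fun s => V₁ s t) (VS₁ S t) S ∧
      HasDerivAt (fun s => VS₁ s t) (VSS₁ S t) S)
    (hd₂ : ∀ S t : ℝ, 0 < S → 0 < t →
      HasDerivAt (fun τ => V₂ S τ) (Vt₂ S t) t ∧
      HasDerivAt (fun s => V₂ s t) (VS₂ S t) S ∧
      HasDerivAt (fun s => VS₂ s t) (VSS₂ S t) S)
    (hpos₁ : ∀ S t : ℝ, 0 < S → 0 < t → 0 < V₁ S t)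
    (hpos₂ : ∀ S t : ℝ, 0 < S → 0 < t → 0 < V₂ S t)
    (hdec₁ : ∀ S t : ℝ, 0 < S → 0 < t → Vt₁ S t ≤ 0)
    (hdec₂ : ∀ S t : ℝ, 0 < S → 0 < t → Vt₂ S t ≤ 0)
    (hVI₁ : ∀ S t : ℝ, 0 < S → 0 < t →
      min (negLp r q σ V₁ Vt₁ VS₁ VSS₁ S t) (V₁ S t - max (E - S) 0) = 0)
    (hVI₂ : ∀ S t : ℝ, 0 < S → 0 < t →
      min (negLp r q σ V₂ Vt₂ VS₂ VSS₂ S t) (V₂ S t - max (E - S) 0) = 0)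
    (hlim0₁ : ∀ t : ℝ, 0 < t →
      Filter.Tendsto (fun S => V₁ S t) (nhdsWithin 0 (Set.Ioi 0)) (nhds E))
    (hlim0₂ : ∀ t : ℝ, 0 < t →
      Filter.Tendsto (fun S => V₂ S t) (nhdsWithin 0 (Set.Ioi 0)) (nhds E))
    (hlimtop₁ : ∀ t : ℝ, 0 < t →
      Filter.Tendsto (fun S => V₁ S t) Filter.atTop (nhds 0))
    (hlimtop₂ : ∀ t : ℝ, 0 < t →
      Filter.Tendsto (fun S => V₂ S t) Filter.atTop (nhds 0)) :
    ∀ S t : ℝ, 0 < S → 0 < t → V₁ S t = V₂ S t :=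
  uniqueness_time_dependent_perpetual_put_VI_general r q σ E hr V₁ Vt₁ VS₁ VSS₁ V₂ Vt₂ VS₂ VSS₂ hd₁
    hd₂ hdec₁ hdec₂ hVI₁ hVI₂ hlim0₁ hlim0₂ hlimtop₁ hlimtop₂
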